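/- Let A be the structure with domain {u, v} where <^A = {(u,v)} and C^A is the binary branching C-relation on a two-element set (containing exactly the triples forced by the axioms, namely C(u;v,v) and C(v;u,u)). Let B be the structure with domain {a, b, c, d} where <^B is the linear order a < c < b < d and C^B is the binary branching C-relation of the binary tree whose leaf pairs (cherries) are {a, b} and {c, d}, so that C(a;c,d), C(b;c,d), C(c;a,b) and C(d;a,b) hold. Then for every finite structure (L; C, <) in which C is a binary branching C-relation and < is a linear order, it is not the case that (L; C, <) → (B)^A_2. Hence the class of all finite linearly ordered binary branching C-relations does not have the Ramsey property. -/
import Mathlib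


/-- `C` is a C-relation: axioms C1–C4, where `C a b c` stands for `C(a; b, c)`. -/
def IsCRel {α : Type*} (C : α → α → α → Prop) : Prop :=
  (∀ a b c, C a b c → C a c b) ∧
  (∀ a b c, C a b c → ¬ C b a c) ∧
  (∀ a b c d, C a b c → (C a d c ∨ C d b c)) ∧
  (∀ a b, a ≠ b → C a b b)

/-- A C-relation is binary branching. -/
def IsBinaryBranching {α : Type*} (C : α → α → α → Prop) : Prop :=
  ∀ a b c, a ≠ b → a ≠ c → b ≠ c → (C a b c ∨ C b a c ∨ C c a b)

/-- Embeddings of linearly ordered C-relations: injective maps preserving the C-relation and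
the order in both directions. -/
def CTEmb {α β : Type} (Ca : α → α → α → Prop) (la : α → α → Prop)
    (Cb : β → β → β → Prop) (lb : β → β → Prop) : Type :=
  {f : α → β // Function.Injective f ∧
    (∀ a b c, Cb (f a) (f b) (f c) ↔ Ca a b c) ∧
    (∀ a b, lb (f a) (f b) ↔ la a b)}

/-- Composition of such embeddings. -/
def CTEmb.comp {α β γ : Type} {Ca : α → α → α → Prop} {la : α → α → Prop}
    {Cb : β → β → β → Prop} {lb : β → β → Prop}
    {Cc : γ → γ → γ → Prop} {lc : γ → γ → Prop}
    (g : CTEmb Cb lb Cc lc) (f : CTEmb Ca la Cb lb) : CTEmb Ca la Cc lc :=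
  ⟨g.1 ∘ f.1, g.2.1.comp f.2.1,
    fun a b c => by simp only [Function.comp_apply, g.2.2.1, f.2.2.1],
    fun a b => by simp only [Function.comp_apply, g.2.2.2, f.2.2.2]⟩

/-- The C-relation on the two-element structure `A` with `u = 0`, `v = 1`: exactly the triples
`C(u; v, v)` and `C(v; u, u)` forced by the axioms. -/
def CA : Fin 2 → Fin 2 → Fin 2 → Prop := fun x y z => y = z ∧ x ≠ y

/-- `<^A = {(u, v)}`. -/
def ltA : Fin 2 → Fin 2 → Prop := fun x y => x = 0 ∧ y = 1

/-- The cherry (pair of sibling leaves) of each element of `B = {a, b, c, d}`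
(`a = 0`, `b = 1`, `c = 2`, `d = 3`): the cherries are `{a, b}` and `{c, d}`. -/
def cherry : Fin 4 → ℕ := fun i => i.val / 2

/-- The C-relation of the binary tree with cherries `{a, b}` and `{c, d}`, so that
`C(a; c, d)`, `C(b; c, d)`, `C(c; a, b)` and `C(d; a, b)` hold. -/
def CB : Fin 4 → Fin 4 → Fin 4 → Prop := fun x y z =>
  (y = z ∧ x ≠ y) ∨ (y ≠ z ∧ cherry y = cherry z ∧ cherry x ≠ cherry y)

/-- The position of each element of `B` in the linear order `a < c < b < d`. -/
def rankB : Fin 4 → ℕ := ![0, 2, 1, 3]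

/-- `<^B` is the linear order `a < c < b < d`. -/
def ltB : Fin 4 → Fin 4 → Prop := fun x y => rankB x < rankB y


private lemma lemA {γ : Type} {Cg : γ → γ → γ → Prop} (hC : IsCRel Cg) {a b c z : γ}
    (h : Cg c a b) (h2 : Cg c a z) : Cg c b z := by
  obtain ⟨c1, c2, c3, _⟩ := hC
  rcases c3 c a b z h with h' | h'
  · exact c1 _ _ _ h'
  · rcases c3 c a z b h2 with h'' | h''
    · exact h''
    · exact absurd (c1 _ _ _ h') (c2 _ _ _ (c1 _ _ _ h''))

private lemma lemB {γ : Type} {Cg : γ → γ → γ → Prop} (hC : IsCRel Cg) {a b c z : γ}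
    (h : Cg c a b) (h2 : Cg a c z) : Cg b c z := by
  obtain ⟨c1, c2, c3, _⟩ := hC
  rcases c3 a z c b (c1 _ _ _ h2) with h' | h'
  · exact absurd (c1 _ _ _ h') (c2 _ _ _ h)
  · exact c1 _ _ _ h'

private lemma lemNe {γ : Type} {Cg : γ → γ → γ → Prop} (hC : IsCRel Cg) {a b c : γ}
    (h : Cg c a b) : c ≠ a := by
  intro e; subst e
  exact hC.2.1 _ _ _ h h

private def eAC : CTEmb CA ltA CB ltB :=
  ⟨![0, 2], by decide, by unfold CA CB cherry; decide, by unfold ltA ltB rankB; decide⟩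

private def eCB : CTEmb CA ltA CB ltB :=
  ⟨![2, 1], by decide, by unfold CA CB cherry; decide, by unfold ltA ltB rankB; decide⟩

/-- No finite structure `(L; C, <)` with `C` a binary branching C-relation and `<` a linear
order satisfies `(L; C, <) → (B)^A_2`; hence the class of all finite linearly ordered binary
branching C-relations does not have the Ramsey property. -/
theorem stmt19 (γ : Type) [Finite γ] (Cg : γ → γ → γ → Prop) (lg : γ → γ → Prop)
    (hC : IsCRel Cg) (hbb : IsBinaryBranching Cg) (hl : IsStrictTotalOrder γ lg) :
    ¬ ∀ χ : CTEmb CA ltA Cg lg → Fin 2,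
        ∃ f : CTEmb CB ltB Cg lg,
          ∀ e₁ e₂ : CTEmb CA ltA CB ltB, χ (f.comp e₁) = χ (f.comp e₂) := by
  classical
  intro H
  obtain ⟨ι, hι⟩ := exists_injective_nat γ
  set m : γ → γ → ℕ := fun x y => sInf (ι '' {z | Cg y x z}) with hm
  obtain ⟨f, hf⟩ := H (fun e => if m (e.1 0) (e.1 1) ≤ m (e.1 1) (e.1 0) then 0 else 1)
  set a := f.1 0 with ha
  set b := f.1 1 with hb
  set c := f.1 2 with hc
  have hcab : Cg c a b := (f.2.2.1 2 0 1).mpr (by simp [CB, cherry])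
  have key := hf eAC eCB
  have comp1a : (f.comp eAC).1 0 = a := rfl
  have comp1c : (f.comp eAC).1 1 = c := rfl
  have comp2c : (f.comp eCB).1 0 = c := rfl
  have comp2b : (f.comp eCB).1 1 = b := rfl
  simp only [comp1a, comp1c, comp2c, comp2b] at key
  have hPset : {z | Cg c a z} = {z | Cg c b z} := by
    ext z
    exact ⟨fun h => lemA hC hcab h, fun h => lemA hC (hC.1 _ _ _ hcab) h⟩
  have hQset : {z | Cg a c z} = {z | Cg b c z} := by
    ext z
    exact ⟨fun h => lemB hC hcab h, fun h => lemB hC (hC.1 _ _ _ hcab) h⟩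
  have hmac : m a c = m b c := by rw [hm]; simp only [hPset]
  have hmca : m c a = m c b := by rw [hm]; simp only [hQset]
  rw [hmca, ← hmac] at key
  have hne : c ≠ a := lemNe hC hcab
  have hPne : a ∈ {z | Cg c a z} := hC.2.2.2 c a hne
  have hQne : c ∈ {z | Cg a c z} := hC.2.2.2 a c (Ne.symm hne)
  have hpq : m a c ≠ m c b := by
    rw [← hmca]
    intro hEq
    have h1 : m a c ∈ ι '' {z | Cg c a z} := Nat.sInf_mem ⟨ι a, a, hPne, rfl⟩
    have h2 : m c a ∈ ι '' {z | Cg a c z} := Nat.sInf_mem ⟨ι c, c, hQne, rfl⟩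
    obtain ⟨zp, hzp, hzp'⟩ := h1
    obtain ⟨zq, hzq, hzq'⟩ := h2
    have : zp = zq := hι (by rw [hzp', hzq', hEq])
    subst this
    exact hC.2.1 _ _ _ hzp hzq
  rcases le_or_gt (m a c) (m c b) with h | h
  · rw [if_pos h, if_neg (fun h' => hpq (le_antisymm h h'))] at key
    exact absurd key (by decide)
  · rw [if_neg (not_le.mpr h), if_pos h.le] at key
    exact absurd key (by decide)
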